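/- Solutions of the mean-field ODE taking values in [0,1]^{K+1} are unique: if t₀ > 0 and y, z : [0, t₀] → ℝ^{K+1} are differentiable functions with y(t), z(t) ∈ [0,1]^{K+1} for all t ∈ [0, t₀], satisfying y′(t) = b(y(t)) and z′(t) = b(z(t)) for all t ∈ [0, t₀], and y(0) = z(0), then y(t) = z(t) for every t ∈ [0, t₀]. -/

import Mathlib

open scoped BigOperators

/-- Extension of a vector in `ℝ^{K+1}` to all natural-number indices, by zero. -/
noncomputable def extCoord {K : ℕ} (y : EuclideanSpace ℝ (Fin (K + 1))) (n : ℕ) : ℝ :=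
  if h : n < K + 1 then y ⟨n, h⟩ else 0

/-- The mean-field drift `b` of the bike-sharing model:
`b(y)(k) = Λ̃·(y(k+1)·[k<K] − y(k)·[k>0])
          + (γ − Σₙ n·y(n))·(y(k−1)·[k>0] − y(k)·[k<K])`. -/
noncomputable def drift (K : ℕ) (Λ' γ : ℝ) (y : EuclideanSpace ℝ (Fin (K + 1))) :
    EuclideanSpace ℝ (Fin (K + 1)) :=
  WithLp.toLp 2 fun (k : Fin (K + 1)) =>
    Λ' * (extCoord y ((k : ℕ) + 1) * (if (k : ℕ) < K then 1 else 0)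
          - y k * (if 0 < (k : ℕ) then 1 else 0))
    + (γ - ∑ n : Fin (K + 1), (n : ℝ) * y n)
      * (extCoord y ((k : ℕ) - 1) * (if 0 < (k : ℕ) then 1 else 0)
         - y k * (if (k : ℕ) < K then 1 else 0))

/-!
The drift is polynomial in the coordinates, hence `C¹` and locally Lipschitz. On the compact set
swept out by two solutions on `[0, t₀]` it is therefore Lipschitz, and Grönwall's inequality
forces two solutions with the same initial value to coincide.
-/

open Set

@[fun_prop]
lemma contDiff_extCoord {K : ℕ} {n : WithTop ℕ∞} (i : ℕ) :
    ContDiff ℝ n fun y : EuclideanSpace ℝ (Fin (K + 1)) => extCoord y i := by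
  unfold extCoord
  split_ifs
  · exact (EuclideanSpace.proj _ : EuclideanSpace ℝ (Fin (K + 1)) →L[ℝ] ℝ).contDiff
  · exact contDiff_const

lemma contDiff_drift {n : WithTop ℕ∞} (K : ℕ) (Λ' γ : ℝ) : ContDiff ℝ n (drift K Λ' γ) := by
  refine contDiff_euclidean.2 fun k => ?_
  simp only [drift]
  fun_prop

theorem ODE_solution_unique_Icc_of_locallyLipschitz
    {E : Type*} [NormedAddCommGroup E] [NormedSpace ℝ E]
    {v : E → E} (hv : LocallyLipschitz v) {f g : ℝ → E} {a b : ℝ}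
    (hf : ∀ t ∈ Icc a b, HasDerivWithinAt f (v (f t)) (Icc a b) t)
    (hg : ∀ t ∈ Icc a b, HasDerivWithinAt g (v (g t)) (Icc a b) t)
    (ha : f a = g a) :
    EqOn f g (Icc a b) := by
  have hf_cont : ContinuousOn f (Icc a b) := fun t ht => (hf t ht).continuousWithinAt
  have hg_cont : ContinuousOn g (Icc a b) := fun t ht => (hg t ht).continuousWithinAt
  set S := f '' Icc a b ∪ g '' Icc a b
  have hS : IsCompact S :=
    (isCompact_Icc.image_of_continuousOn hf_cont).union
      (isCompact_Icc.image_of_continuousOn hg_cont)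
  obtain ⟨K, hK⟩ := hv.locallyLipschitzOn.exists_lipschitzOnWith_of_compact hS
  have hasDerivWithinAt_Ici {h : ℝ → E}
      (hh : ∀ t ∈ Icc a b, HasDerivWithinAt h (v (h t)) (Icc a b) t) (t : ℝ) (ht : t ∈ Ico a b) :
      HasDerivWithinAt h (v (h t)) (Ici t) t :=
    (hh t (Ico_subset_Icc_self ht)).mono_of_mem_nhdsWithin (Icc_mem_nhdsGE_of_mem ht)
  exact ODE_solution_unique_of_mem_Icc_right (v := fun _ => v) (s := fun _ => S)
    (fun _ _ => hK) hf_cont (hasDerivWithinAt_Ici hf)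
    (fun t ht => .inl (mem_image_of_mem f (Ico_subset_Icc_self ht))) hg_cont
    (hasDerivWithinAt_Ici hg) (fun t ht => .inr (mem_image_of_mem g (Ico_subset_Icc_self ht))) ha

theorem drift_ode_uniqueness_general (K : ℕ) (Λ' γ : ℝ)
    (t₀ : ℝ)
    (y z : ℝ → EuclideanSpace ℝ (Fin (K + 1)))
    (hy : ∀ t ∈ Set.Icc (0 : ℝ) t₀,
      HasDerivWithinAt y (drift K Λ' γ (y t)) (Set.Icc (0 : ℝ) t₀) t)
    (hz : ∀ t ∈ Set.Icc (0 : ℝ) t₀,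
      HasDerivWithinAt z (drift K Λ' γ (z t)) (Set.Icc (0 : ℝ) t₀) t)
    (h0 : y 0 = z 0) :
    ∀ t ∈ Set.Icc (0 : ℝ) t₀, y t = z t :=
  ODE_solution_unique_Icc_of_locallyLipschitz
    (contDiff_drift (n := 1) K Λ' γ).locallyLipschitz hy hz h0

/-- Solutions of the mean-field ODE taking values in the cube `[0,1]^{K+1}` are unique. -/
theorem drift_ode_uniqueness (K : ℕ) (hK : 1 ≤ K) (Λ' γ : ℝ) (hΛ : 0 < Λ') (hγ : 0 ≤ γ)
    (t₀ : ℝ) (ht₀ : 0 < t₀)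
    (y z : ℝ → EuclideanSpace ℝ (Fin (K + 1)))
    (hycube : ∀ t ∈ Set.Icc (0 : ℝ) t₀, ∀ k, y t k ∈ Set.Icc (0 : ℝ) 1)
    (hzcube : ∀ t ∈ Set.Icc (0 : ℝ) t₀, ∀ k, z t k ∈ Set.Icc (0 : ℝ) 1)
    (hy : ∀ t ∈ Set.Icc (0 : ℝ) t₀,
      HasDerivWithinAt y (drift K Λ' γ (y t)) (Set.Icc (0 : ℝ) t₀) t)
    (hz : ∀ t ∈ Set.Icc (0 : ℝ) t₀,
      HasDerivWithinAt z (drift K Λ' γ (z t)) (Set.Icc (0 : ℝ) t₀) t)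
    (h0 : y 0 = z 0) :
    ∀ t ∈ Set.Icc (0 : ℝ) t₀, y t = z t :=
  drift_ode_uniqueness_general K Λ' γ t₀ y z hy hz h0
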